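/- In the 2×2 LTU example with feasibility constraints u₁ + 2v₁ = 1 (match 11), 2u₁ + v₂ = 1 (match 12), u₂ + v₁ = 1 (match 21), u₂ + v₂ = 1 (match 22), and one agent of each type (n₁ = n₂ = m₁ = m₂ = 1), both of the following outcomes are stable: (A) μ₁₁ = μ₂₂ = 1 (other μ = 0), u₁ = u₂ = 1, v₁ = v₂ = 0; and (B) μ₁₂ = μ₂₁ = 1 (other μ = 0), u₁ = u₂ = 0, v₁ = v₂ = 1. However, the exchanged outcome (μ from B, utilities from A) is not stable: it violates condition (4), since μ₁₂ > 0 but 2u₁ + v₂ = 2 ≠ 1. -/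

import Mathlib

/-- Stability for the 2×2 LTU example with within-match feasibility constraints
u₁ + 2v₁ = 1, 2u₁ + v₂ = 1, u₂ + v₁ = 1, u₂ + v₂ = 1 and unit masses.
`cu x y` (resp. `cv x y`) is the coefficient on the worker's (resp. employer's)
utility in the constraint of match (x,y), whose right-hand side is 1. -/
def ExampleStable (μ : Fin 2 → Fin 2 → ℝ) (u v : Fin 2 → ℝ) : Prop :=
  let cu : Fin 2 → Fin 2 → ℝ := !![1, 2; 1, 1]
  let cv : Fin 2 → Fin 2 → ℝ := !![2, 1; 1, 1]
  (∀ x y, 0 ≤ μ x y) ∧ (∀ x, 0 ≤ u x) ∧ (∀ y, 0 ≤ v y) ∧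
  (∀ x y, cu x y * u x + cv x y * v y ≥ 1) ∧
  (∀ x, ∑ y, μ x y ≤ 1) ∧ (∀ y, ∑ x, μ x y ≤ 1) ∧
  (∀ x y, 0 < μ x y → cu x y * u x + cv x y * v y = 1) ∧
  (∀ x, 0 < u x → ∑ y, μ x y = 1) ∧ (∀ y, 0 < v y → ∑ x, μ x y = 1)

namespace ExampleStable

/-- Complementary slackness at the match (1,2), whose constraint is `2u₁ + v₂ = 1`. -/
theorem two_mul_add_eq_one {μ : Fin 2 → Fin 2 → ℝ} {u v : Fin 2 → ℝ}
    (h : ExampleStable μ u v) (hμ : 0 < μ 0 1) : 2 * u 0 + v 1 = 1 := by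
  simpa using h.2.2.2.2.2.2.1 0 1 hμ

end ExampleStable

theorem exampleStable_diagonal :
    ExampleStable (fun x y => !![(1:ℝ), 0; 0, 1] x y) ![1, 1] ![0, 0] := by
  refine ⟨?_, ?_, ?_, ?_, ?_, ?_, ?_, ?_, ?_⟩ <;>
    simp [Fin.forall_fin_two, Fin.sum_univ_two]

theorem exampleStable_antidiagonal :
    ExampleStable (fun x y => !![(0:ℝ), 1; 1, 0] x y) ![0, 0] ![1, 1] := by
  refine ⟨?_, ?_, ?_, ?_, ?_, ?_, ?_, ?_, ?_⟩ <;>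
    simp [Fin.forall_fin_two, Fin.sum_univ_two]

/-- In the 2×2 LTU example, the outcomes A (diagonal matching,
u = (1,1), v = (0,0)) and B (antidiagonal matching, u = (0,0), v = (1,1)) are
both stable, but the exchanged outcome (matching of B with utilities of A) is
not stable. -/
theorem ltu_example_nonexchangeable :
    ExampleStable (fun x y => !![(1:ℝ), 0; 0, 1] x y) ![1, 1] ![0, 0] ∧
    ExampleStable (fun x y => !![(0:ℝ), 1; 1, 0] x y) ![0, 0] ![1, 1] ∧
    ¬ ExampleStable (fun x y => !![(0:ℝ), 1; 1, 0] x y) ![1, 1] ![0, 0] := by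
  refine ⟨exampleStable_diagonal, exampleStable_antidiagonal, fun h => ?_⟩
  have := h.two_mul_add_eq_one (by simp)
  norm_num at this
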